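/- Suppose given a map of short exact sequences of chain complexes 0 → C → D → E → 0 and 0 → C' → D' → E' → 0, where chain maps f: D → D' and e: E → E' are given making the right square commute up to chain homotopy, with E, E' degreewise projective. Then there exists a chain map g: C → C' (after replacing f by a chain-homotopic map) making both squares commute strictly; moreover if f and e are quasi-isomorphisms then so is g. -/

import Mathlib

open CategoryTheory

section Aux

variable {V : Type*} [Category V] [Preadditive V] {ι : Type*} {c : ComplexShape ι}
  {C D : HomologicalComplex V c}

lemma nullHomotopicMap_eq_sub {f g : C ⟶ D} (h : Homotopy f g) :
    Homotopy.nullHomotopicMap h.hom = f - g := by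
  ext n
  have hc := h.comm n
  show dNext n h.hom + prevD n h.hom = (f - g).f n
  rw [HomologicalComplex.sub_f_apply, hc]
  abel

end Aux

/-- Given a map of short exact sequences of chain complexes
`0 → C → D → E → 0` and `0 → C' → D' → E' → 0` of `R`-modules with `E`, `E'` degreewise
projective, where `f : D → D'` and `e : E → E'` are chain maps making the right square
commute up to chain homotopy, there exist a chain map `f'` chain homotopic to `f` and a
chain map `g : C → C'` making both squares commute strictly; moreover if `f` and `e` are
quasi-isomorphisms then so is `g`. -/
theorem stmt13 (R : Type) [Ring R]
    {C D E C' D' E' : ChainComplex (ModuleCat R) ℕ}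
    (i : C ⟶ D) (p : D ⟶ E) (w : i ≫ p = 0)
    (i' : C' ⟶ D') (p' : D' ⟶ E') (w' : i' ≫ p' = 0)
    (hse : (ShortComplex.mk i p w).ShortExact)
    (hse' : (ShortComplex.mk i' p' w').ShortExact)
    (hproj : ∀ n, Module.Projective R (E.X n))
    (hproj' : ∀ n, Module.Projective R (E'.X n))
    (f : D ⟶ D') (e : E ⟶ E')
    (h : Homotopy (f ≫ p') (p ≫ e)) :
    ∃ (f' : D ⟶ D') (g : C ⟶ C'),
      Nonempty (Homotopy f' f) ∧
      g ≫ i' = i ≫ f' ∧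
      f' ≫ p' = p ≫ e ∧
      (QuasiIso f → QuasiIso e → QuasiIso g) := by
  -- degreewise epimorphisms and sections
  have hepi : ∀ n, Epi (p'.f n) :=
    fun n => ((HomologicalComplex.shortExact_iff_degreewise_shortExact _).mp hse' n).epi_g
  have hP : ∀ n, Projective (E'.X n) := fun n => (IsProjective.iff_projective (E'.X n)).mp (hproj' n)
  let s : ∀ n, E'.X n ⟶ D'.X n := fun n => Projective.factorThru (𝟙 (E'.X n)) (p'.f n)
  have hs : ∀ n, s n ≫ p'.f n = 𝟙 (E'.X n) := fun n => Projective.factorThru_comp _ _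
  -- the correction term
  let K : ∀ (a b : ℕ), D.X a ⟶ D'.X b := fun a b => h.hom a b ≫ s b
  have hKzero : ∀ a b, ¬ (ComplexShape.down ℕ).Rel b a → K a b = 0 := by
    intro a b hab
    simp only [K, h.zero a b hab, Limits.zero_comp]
  let N : D ⟶ D' := Homotopy.nullHomotopicMap K
  let f' : D ⟶ D' := f - N
  have hNp' : N ≫ p' = f ≫ p' - p ≫ e := by
    rw [show N ≫ p' = Homotopy.nullHomotopicMap fun a b => K a b ≫ p'.f b from
      Homotopy.nullHomotopicMap_comp K p']
    have : (fun a b => K a b ≫ p'.f b) = h.hom := by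
      funext a b
      simp only [K, Category.assoc, hs b, Category.comp_id]
    rw [this, nullHomotopicMap_eq_sub h]
  have hf'p' : f' ≫ p' = p ≫ e := by
    simp only [f', Preadditive.sub_comp, hNp']
    abel
  -- the homotopy from f' to f
  have hfN : f - f' = N := by simp [f']
  have hhomotopy : Homotopy f' f :=
    (Homotopy.equivSubZero.symm ((Homotopy.ofEq hfN).trans (Homotopy.nullHomotopy K hKzero))).symm
  -- construct g using that i' is the kernel of p'
  have hw0 : (i ≫ f') ≫ p' = 0 := by
    rw [Category.assoc, hf'p', ← Category.assoc, w, Limits.zero_comp]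
  obtain ⟨g, hg⟩ := Limits.KernelFork.IsLimit.lift' hse'.fIsKernel (i ≫ f') hw0
  refine ⟨f', g, ⟨hhomotopy⟩, hg, hf'p', ?_⟩
  -- quasi-isomorphism part
  intro hf he
  have hf' : QuasiIso f' := by
    rw [quasiIso_iff]
    intro n
    rw [quasiIsoAt_iff_isIso_homologyMap, hhomotopy.homologyMap_eq]
    rw [← quasiIsoAt_iff_isIso_homologyMap]
    infer_instance
  let φ : ShortComplex.mk i p w ⟶ ShortComplex.mk i' p' w' :=
    { τ₁ := g, τ₂ := f', τ₃ := e, comm₁₂ := hg, comm₂₃ := hf'p' }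
  rw [quasiIso_iff]
  intro j
  rw [quasiIsoAt_iff_isIso_homologyMap]
  have hij : (ComplexShape.down ℕ).Rel (j + 1) j := rfl
  have hIf' : ∀ n, IsIso (HomologicalComplex.homologyMap f' n) := fun n => by
    rw [← quasiIsoAt_iff_isIso_homologyMap]; infer_instance
  have hIe : ∀ n, IsIso (HomologicalComplex.homologyMap e n) := fun n => by
    rw [← quasiIsoAt_iff_isIso_homologyMap]; infer_instance
  haveI := hIf' (j+1); haveI := hIf' j; haveI := hIe (j+1); haveI := hIe j
  exact Abelian.isIso_of_epi_of_isIso_of_isIso_of_mono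
    (HomologicalComplex.HomologySequence.composableArrows₅_exact hse (j+1) j hij).δ₀
    (HomologicalComplex.HomologySequence.composableArrows₅_exact hse' (j+1) j hij).δ₀
    (ComposableArrows.δ₀Functor.map
      (HomologicalComplex.HomologySequence.mapComposableArrows₅ φ hse hse' (j+1) j hij))
    (inferInstanceAs (Epi (HomologicalComplex.homologyMap f' (j+1))))
    (inferInstanceAs (IsIso (HomologicalComplex.homologyMap e (j+1))))
    (inferInstanceAs (IsIso (HomologicalComplex.homologyMap f' j)))
    (inferInstanceAs (Mono (HomologicalComplex.homologyMap e j)))
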